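/- arXiv:2109.06739 — 16 statements merged into one kernel-verified Lean document; each statement's English description precedes it below -/
import Mathlib

section
/- If (U, S, C) is a Mammen space and I(C) is the ideal of subsets of U generated by C, then (U, S, I(C)) is also a Mammen space. -/
open Set Topology TopologicalSpace

/-- A topology is perfect if every nonempty open set is infinite. -/
def IsPerfectTop {U : Type*} (T : TopologicalSpace U) : Prop :=
  ∀ V : Set U, IsOpen[T] V → V.Nonempty → V.Infinite

/-- A perfect topology is maximal if no strictly finer topology is perfect. -/
def IsMaxPerfectTop {U : Type*} (T : TopologicalSpace U) : Prop :=
  IsPerfectTop T ∧ ∀ T' : TopologicalSpace U, T' ≤ T → IsPerfectTop T' → T' = T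

/-- `(U, T, C)` is a Mammen space. -/
structure IsMammen {U : Type*} (T : TopologicalSpace U) (C : Set (Set U)) : Prop where
  nonemptyU : Nonempty U
  perfect : IsPerfectTop T
  hausdorff : @T2Space U T
  exNonempty : ∃ c ∈ C, c.Nonempty
  unionMem : ∀ c ∈ C, ∀ d ∈ C, c ∪ d ∈ C
  interMem : ∀ c ∈ C, ∀ d ∈ C, c ∩ d ∈ C
  singletonMem : ∀ c ∈ C, c.Nonempty → ∃ x ∈ c, ({x} : Set U) ∈ C
  emptyMem : ∅ ∈ C
  openInterC : ∀ s ∈ C, IsOpen[T] s → s = ∅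
  interOpenMem : ∀ c ∈ C, ∀ s : Set U, IsOpen[T] s → c ∩ s ∈ C

/-- A Mammen space is complete if every subset is the union of an open set
and a choice category. -/
def MammenComplete {U : Type*} (T : TopologicalSpace U) (C : Set (Set U)) : Prop :=
  ∀ X : Set U, ∃ s c, IsOpen[T] s ∧ c ∈ C ∧ X = s ∪ c


/-- The ideal generated by C: sets contained in a finite union of members of C. -/
def genIdeal {U : Type*} (C : Set (Set U)) : Set (Set U) :=
  {X | ∃ F : Finset (Set U), ↑F ⊆ C ∧ X ⊆ ⋃₀ ↑F}

lemma sUnion_finset_mem {U : Type*} {T : TopologicalSpace U} {C : Set (Set U)}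
    (h : IsMammen T C) (F : Finset (Set U)) (hF : ↑F ⊆ C) : ⋃₀ ↑F ∈ C := by
  classical
  induction F using Finset.induction with
  | empty => simpa using h.emptyMem
  | @insert a s hx ih =>
    rw [Finset.coe_insert, Set.sUnion_insert]
    refine h.unionMem _ (hF (by simp)) _ (ih fun x hx => hF (by simp [hx]))

theorem stmt0 {U : Type*} (T : TopologicalSpace U) (C : Set (Set U))
    (h : IsMammen T C) : IsMammen T (genIdeal C) := by
  classical
  constructor
  · exact h.nonemptyU
  · exact h.perfect
  · exact h.hausdorff
  · obtain ⟨c, hc, hcn⟩ := h.exNonempty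
    exact ⟨c, ⟨{c}, by simpa using hc, by simp⟩, hcn⟩
  · rintro c ⟨F, hF, hcF⟩ d ⟨G, hG, hdG⟩
    refine ⟨F ∪ G, ?_, ?_⟩
    · simpa [Finset.coe_union] using Set.union_subset hF hG
    · rw [Finset.coe_union, Set.sUnion_union]
      exact Set.union_subset_union hcF hdG
  · rintro c ⟨F, hF, hcF⟩ d _
    exact ⟨F, hF, fun x hx => hcF hx.1⟩
  · rintro c ⟨F, hF, hcF⟩ ⟨x, hx⟩
    obtain ⟨a, haF, hxa⟩ := hcF hx
    exact ⟨x, hx, ⟨{a}, by simpa using hF haF, by simpa using hxa⟩⟩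
  · exact ⟨∅, by simp, by simp⟩
  · rintro s ⟨F, hF, hsF⟩ hs
    have hmem : s ∈ C := by
      have : s = ⋃₀ ((F.image fun c => c ∩ s : Finset (Set U)) : Set (Set U)) := by
        ext x
        simp only [Set.mem_sUnion, Finset.coe_image, Set.mem_image, Finset.mem_coe]
        constructor
        · intro hxs
          obtain ⟨a, haF, hxa⟩ := hsF hxs
          exact ⟨a ∩ s, ⟨a, haF, rfl⟩, hxa, hxs⟩
        · rintro ⟨_, ⟨a, _, rfl⟩, _, hxs⟩
          exact hxs
      rw [this]
      apply sUnion_finset_mem h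
      intro t ht
      simp only [Finset.coe_image, Set.mem_image, Finset.mem_coe] at ht
      obtain ⟨a, haF, rfl⟩ := ht
      exact h.interOpenMem a (hF haF) s hs
    exact h.openInterC s hmem hs
  · rintro c ⟨F, hF, hcF⟩ s _
    exact ⟨F, hF, fun x hx => hcF hx.1⟩
end

section
/- If T is a perfect Hausdorff topology on an infinite set U, then (U, T, ND(T)) is a Mammen space, where ND(T) is the collection of nowhere dense subsets of U in the topology T. -/
open Set Topology TopologicalSpace

theorem stmt3 {U : Type*} [Infinite U] (T : TopologicalSpace U)
    (hperf : IsPerfectTop T) (hT2 : @T2Space U T) :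
    IsMammen T {X : Set U | @interior U T (@closure U T X) = ∅} := by
  letI := T
  haveI := hT2
  have hmono : ∀ c d : Set U, c ⊆ d → interior (closure d) = ∅ →
      interior (closure c) = ∅ := by
    intro c d h hd
    have := interior_mono (closure_mono h)
    rw [hd] at this
    exact Set.subset_eq_empty this rfl
  have hsing : ∀ x : U, interior (closure ({x} : Set U)) = ∅ := by
    intro x
    rw [closure_singleton]
    by_contra h
    have := hperf _ isOpen_interior (Set.nonempty_iff_ne_empty.2 h)
    exact this (Set.Finite.subset (Set.finite_singleton x) interior_subset)
  refine ⟨inferInstance, hperf, hT2, ?_, ?_, ?_, ?_, ?_, ?_, ?_⟩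
  · obtain ⟨x⟩ : Nonempty U := inferInstance
    exact ⟨{x}, hsing x, Set.singleton_nonempty x⟩
  · intro c hc d hd
    simp only [Set.mem_setOf_eq] at *
    rw [closure_union]
    have h1 : interior (closure c ∪ closure d) \ closure c ⊆ interior (closure d) := by
      apply interior_maximal
      · intro x hx
        rcases (interior_subset hx.1 : x ∈ closure c ∪ closure d) with h | h
        · exact absurd h hx.2
        · exact h
      · exact isOpen_interior.sdiff isClosed_closure
    rw [hd] at h1
    have h2 : interior (closure c ∪ closure d) ⊆ closure c := by
      intro x hx
      by_contra hxc
      exact h1 ⟨hx, hxc⟩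
    have h3 : interior (closure c ∪ closure d) ⊆ interior (closure c) := by
      rw [← closure_closure (s := c)] at h2 ⊢
      exact interior_maximal (h2.trans subset_closure) isOpen_interior
        |>.trans (by rw [closure_closure])
    rw [hc] at h3
    exact Set.subset_eq_empty h3 rfl
  · intro c hc d hd
    exact hmono _ c Set.inter_subset_left hc
  · intro c hc ⟨x, hx⟩
    exact ⟨x, hx, hsing x⟩
  · simp
  · intro s hs hso
    simp only [Set.mem_setOf_eq] at hs
    have : s ⊆ interior (closure s) := interior_maximal subset_closure hso
    rw [hs] at this
    exact Set.subset_eq_empty this rfl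
  · intro c hc s _
    exact hmono _ c Set.inter_subset_left hc
end

section
/- If (U, S, C) is a complete Mammen space, then a subset X of U belongs to C if and only if X contains no nonempty open set of S (equivalently, X has empty interior). -/
open Set Topology TopologicalSpace

theorem stmt4 {U : Type*} (T : TopologicalSpace U) (C : Set (Set U))
    (h : IsMammen T C) (hcomp : MammenComplete T C) (X : Set U) :
    X ∈ C ↔ ¬ ∃ V : Set U, IsOpen[T] V ∧ V.Nonempty ∧ V ⊆ X := by
  constructor
  · rintro hX ⟨V, hV, hVne, hVX⟩
    have : X ∩ V ∈ C := h.interOpenMem X hX V hV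
    have hEq : X ∩ V = V := Set.inter_eq_self_of_subset_right hVX
    rw [hEq] at this
    exact hVne.ne_empty (h.openInterC V this hV)
  · intro hno
    obtain ⟨s, c, hs, hc, hX⟩ := hcomp X
    have hse : s = ∅ := by
      by_contra hne
      exact hno ⟨s, hs, Set.nonempty_iff_ne_empty.mpr hne, hX ▸ Set.subset_union_left⟩
    rw [hX, hse, Set.empty_union]
    exact hc
end

section
/- If (U, S, C) is a complete Mammen space, then C is an ideal: it is closed under subsets and finite unions, and consists precisely of the subsets of U with empty interior in the topology S. In particular, every nowhere dense subset of U belongs to C. -/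
open Set Topology TopologicalSpace

theorem stmt5 {U : Type*} (T : TopologicalSpace U) (C : Set (Set U))
    (h : IsMammen T C) (hcomp : MammenComplete T C) :
    (∀ c ∈ C, ∀ d : Set U, d ⊆ c → d ∈ C) ∧
    (∀ c ∈ C, ∀ d ∈ C, c ∪ d ∈ C) ∧
    C = {X : Set U | @interior U T X = ∅} ∧
    (∀ X : Set U, @interior U T (@closure U T X) = ∅ → X ∈ C) := by
  letI := T
  have hint : ∀ c ∈ C, interior c = (∅ : Set U) := by
    intro c hc
    have h1 : c ∩ interior c ∈ C := h.interOpenMem c hc _ isOpen_interior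
    have h2 : c ∩ interior c = interior c := Set.inter_eq_self_of_subset_right interior_subset
    rw [h2] at h1
    exact h.openInterC _ h1 isOpen_interior
  have hrev : ∀ X : Set U, interior X = ∅ → X ∈ C := by
    intro X hX
    obtain ⟨s, c, hs, hc, hX'⟩ := hcomp X
    have hsub : s ⊆ interior X := interior_maximal (hX' ▸ Set.subset_union_left) hs
    have hse : s = ∅ := Set.subset_eq_empty hsub hX
    rw [hX', hse, Set.empty_union]
    exact hc
  refine ⟨?_, h.unionMem, ?_, ?_⟩
  · intro c hc d hd
    exact hrev d (Set.subset_eq_empty (interior_mono hd) (hint c hc))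
  · ext X
    exact ⟨fun hX => hint X hX, fun hX => hrev X hX⟩
  · intro X hX
    exact hrev X (Set.subset_eq_empty (interior_mono subset_closure) hX)
end

section
/- Let (U, S, C) be a Mammen space. If there exists X ⊆ U such that for every nonempty open set V ∈ S, both V ∩ X and V \ X are infinite, then (U, S, C) is not complete. -/
open Set Topology TopologicalSpace

theorem stmt6 {U : Type*} (T : TopologicalSpace U) (C : Set (Set U))
    (h : IsMammen T C)
    (hX : ∃ X : Set U, ∀ V : Set U, IsOpen[T] V → V.Nonempty →
      (V ∩ X).Infinite ∧ (V \ X).Infinite) :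
    ¬ MammenComplete T C := by
  intro hc
  obtain ⟨X, hXp⟩ := hX
  -- any set Y satisfying the splitting property is in C
  have key : ∀ Y : Set U, (∀ V : Set U, IsOpen[T] V → V.Nonempty →
      (V ∩ Y).Infinite ∧ (V \ Y).Infinite) → Y ∈ C := by
    intro Y hY
    obtain ⟨s, c, hs, hcC, hYe⟩ := hc Y
    have hse : s = ∅ := by
      by_contra hne
      have hne' : s.Nonempty := Set.nonempty_iff_ne_empty.mpr hne
      have hsub : s ⊆ Y := hYe ▸ Set.subset_union_left
      exact (hY s hs hne').2 (by simp [Set.diff_eq_empty.mpr hsub])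
    rw [hYe, hse, Set.empty_union]
    exact hcC
  have hXC : X ∈ C := key X hXp
  have hXcC : Xᶜ ∈ C := by
    apply key
    intro V hV hne
    obtain ⟨h1, h2⟩ := hXp V hV hne
    constructor
    · exact h2.mono (by intro x hx; exact ⟨hx.1, hx.2⟩)
    · exact h1.mono (by intro x hx; exact ⟨hx.1, not_not_intro hx.2⟩)
  have huniv : (Set.univ : Set U) ∈ C := by
    have := h.unionMem X hXC Xᶜ hXcC
    simpa [Set.union_compl_self] using this
  have : (Set.univ : Set U) = ∅ := h.openInterC _ huniv isOpen_univ
  obtain ⟨x⟩ := h.nonemptyU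
  exact absurd (Set.mem_univ x) (this ▸ Set.notMem_empty x)
end

section
/- If (U, S, C) is a complete Mammen space, then the topology S is not second countable. -/
open Set Topology TopologicalSpace

open Function

/-!
If the topology were second countable, perfectness would let us pick, injectively, two points in
every basic open set, giving two disjoint dense sets `A` and `B`. Their complements have empty
interior, so completeness puts them in `C`; hence `Aᶜ ∪ Bᶜ = univ` lies in `C`, but it is a
nonempty open set.
-/

/-- Hall's theorem applies because each `s i` contains `e i + 1` points, where `e` is an injection
of `ι` into `ℕ`. -/
theorem Set.exists_injective_forall_mem_of_infinite {ι α : Type*} [Countable ι]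
    {s : ι → Set α} (hs : ∀ i, (s i).Infinite) :
    ∃ x : ι → α, Injective x ∧ ∀ i, x i ∈ s i := by
  classical
  obtain ⟨e, he⟩ := Countable.exists_injective_nat ι
  choose t hts hcard using fun i => (hs i).exists_subset_card_eq (e i + 1)
  have hall : ∀ S : Finset ι, S.card ≤ (S.biUnion t).card := by
    intro S
    rcases S.eq_empty_or_nonempty with rfl | hS
    · simp
    obtain ⟨i, hi, hmax⟩ := S.exists_max_image e hS
    calc S.card = (S.image e).card := (Finset.card_image_of_injective S he).symm
      _ ≤ (Finset.range (e i + 1)).card :=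
          Finset.card_le_card fun n hn => by
            obtain ⟨j, hj, rfl⟩ := Finset.mem_image.mp hn
            exact Finset.mem_range.mpr (Nat.lt_succ_of_le (hmax j hj))
      _ = (t i).card := by rw [Finset.card_range, hcard]
      _ ≤ (S.biUnion t).card := Finset.card_le_card (Finset.subset_biUnion_of_mem t hi)
  obtain ⟨x, hinj, hxt⟩ := (Finset.all_card_le_biUnion_card_iff_exists_injective t).mp hall
  exact ⟨x, hinj, fun i => hts i (hxt i)⟩

theorem exists_disjoint_dense_of_isPerfectTop {U : Type*} [T : TopologicalSpace U]
    [SecondCountableTopology U] (hperf : IsPerfectTop T) :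
    ∃ A B : Set U, Dense A ∧ Dense B ∧ Disjoint A B := by
  obtain ⟨b, hbc, hbne, hb⟩ := exists_countable_basis U
  have : Countable b := hbc.to_subtype
  obtain ⟨x, hinj, hx⟩ := exists_injective_forall_mem_of_infinite (ι := b × Bool)
    (s := fun p => p.1.1) fun p =>
      hperf _ (hb.isOpen p.1.2) (nonempty_iff_ne_empty.mpr fun h => hbne (h ▸ p.1.2))
  have hdense : ∀ i : Bool, Dense (range fun t : b => x (t, i)) := by
    intro i
    refine dense_iff_inter_open.mpr fun V hV ⟨p, hp⟩ => ?_
    obtain ⟨t, htb, -, htV⟩ := hb.exists_subset_of_mem_open hp hV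
    exact ⟨x (⟨t, htb⟩, i), htV (hx (⟨t, htb⟩, i)), mem_range_self _⟩
  refine ⟨_, _, hdense true, hdense false, disjoint_left.mpr ?_⟩
  rintro _ ⟨s, rfl⟩ ⟨t, hts⟩
  exact Bool.false_ne_true (congrArg Prod.snd (hinj hts))

theorem MammenComplete.mem_of_interior_eq_empty {U : Type*} [T : TopologicalSpace U]
    {C : Set (Set U)} (hcomp : MammenComplete T C) {X : Set U} (hX : interior X = ∅) :
    X ∈ C := by
  obtain ⟨s, c, hs, hc, rfl⟩ := hcomp X
  have hs_empty : s = ∅ :=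
    subset_empty_iff.mp (hX ▸ interior_maximal subset_union_left hs)
  rwa [hs_empty, empty_union]

theorem stmt7 {U : Type*} (T : TopologicalSpace U) (C : Set (Set U))
    (h : IsMammen T C) (hcomp : MammenComplete T C) :
    ¬ @SecondCountableTopology U T := by
  intro _
  have := h.nonemptyU
  obtain ⟨A, B, hA, hB, hAB⟩ := exists_disjoint_dense_of_isPerfectTop h.perfect
  have hAc : Aᶜ ∈ C := MammenComplete.mem_of_interior_eq_empty hcomp hA.interior_compl
  have hBc : Bᶜ ∈ C := MammenComplete.mem_of_interior_eq_empty hcomp hB.interior_compl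
  have huniv : (univ : Set U) ∈ C := by
    simpa [← compl_inter, hAB.inter_eq] using h.unionMem _ hAc _ hBc
  exact univ_nonempty.ne_empty (h.openInterC _ huniv isOpen_univ)
end

section
/- Let T be a perfect topology on a nonempty set U and suppose X ⊆ U is such that for every open set V, the intersection X ∩ V is either empty or infinite. Then the collection T ∪ {V ∩ X : V ∈ T} is a basis for a perfect topology T' refining T in which X is open. -/
open Set Topology TopologicalSpace

theorem stmt8 {U : Type*} [Nonempty U] (T : TopologicalSpace U)
    (hperf : IsPerfectTop T) (X : Set U)
    (hX : ∀ V : Set U, IsOpen[T] V → X ∩ V = ∅ ∨ (X ∩ V).Infinite) :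
    @TopologicalSpace.IsTopologicalBasis U
        (TopologicalSpace.generateFrom
          ({V | IsOpen[T] V} ∪ {W | ∃ V, IsOpen[T] V ∧ W = V ∩ X}))
        ({V | IsOpen[T] V} ∪ {W | ∃ V, IsOpen[T] V ∧ W = V ∩ X}) ∧
      TopologicalSpace.generateFrom
          ({V | IsOpen[T] V} ∪ {W | ∃ V, IsOpen[T] V ∧ W = V ∩ X}) ≤ T ∧
      IsPerfectTop (TopologicalSpace.generateFrom
          ({V | IsOpen[T] V} ∪ {W | ∃ V, IsOpen[T] V ∧ W = V ∩ X})) ∧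
      IsOpen[TopologicalSpace.generateFrom
          ({V | IsOpen[T] V} ∪ {W | ∃ V, IsOpen[T] V ∧ W = V ∩ X})] X := by
  set S : Set (Set U) := {V | IsOpen[T] V} ∪ {W | ∃ V, IsOpen[T] V ∧ W = V ∩ X} with hS
  have hinter : ∀ s ∈ S, ∀ t ∈ S, s ∩ t ∈ S := by
    rintro s hs t ht
    rcases hs with hs | ⟨V, hV, rfl⟩ <;> rcases ht with ht | ⟨W, hW, rfl⟩
    · exact Or.inl (hs.inter ht)
    · exact Or.inr ⟨s ∩ W, hs.inter hW, by rw [inter_assoc]⟩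
    · exact Or.inr ⟨V ∩ t, hV.inter ht, by ext x; simp [and_comm, and_assoc, and_left_comm]⟩
    · exact Or.inr ⟨V ∩ W, hV.inter hW, by ext x; simp; tauto⟩
  have huniv : (univ : Set U) ∈ S := Or.inl isOpen_univ
  have h1 : ∀ t1 ∈ S, ∀ t2 ∈ S, ∀ x ∈ t1 ∩ t2, ∃ t3 ∈ S, x ∈ t3 ∧ t3 ⊆ t1 ∩ t2 := by
    rintro t1 ht1 t2 ht2 x hx
    exact ⟨t1 ∩ t2, hinter t1 ht1 t2 ht2, hx, le_refl _⟩
  have h2 : ⋃₀ S = univ := sUnion_eq_univ_iff.2 fun x => ⟨univ, huniv, trivial⟩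
  have hbasis : @TopologicalSpace.IsTopologicalBasis U (generateFrom S) S :=
    @TopologicalSpace.IsTopologicalBasis.mk U (generateFrom S) S h1 h2 rfl
  have hle : generateFrom S ≤ T := by
    rw [← @generateFrom_setOf_isOpen U T]
    exact le_generateFrom fun s hs => TopologicalSpace.GenerateOpen.basic s (Or.inl hs)
  have hSinf : ∀ s ∈ S, s.Nonempty → s.Infinite := by
    rintro s (hs | ⟨V, hV, rfl⟩) hne
    · exact hperf s hs hne
    · rcases hX V hV with h | h
      · rw [inter_comm] at hne; exact absurd h hne.ne_empty
      · rwa [inter_comm]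
  have hperf' : IsPerfectTop (generateFrom S) := by
    intro V hV hne
    obtain ⟨x, hx⟩ := hne
    obtain ⟨b, hbS, hxb, hbV⟩ :=
      @TopologicalSpace.IsTopologicalBasis.exists_subset_of_mem_open U (generateFrom S) S
        hbasis x V hx hV
    exact (hSinf b hbS ⟨x, hxb⟩).mono hbV
  refine ⟨hbasis, hle, hperf', ?_⟩
  have : X ∈ S := Or.inr ⟨univ, isOpen_univ, (univ_inter X).symm⟩
  exact TopologicalSpace.GenerateOpen.basic X this
end

section
/- A perfect topology T on an infinite set U is maximal among perfect topologies on U if and only if every subset X ⊆ U with the property that X ∩ V is empty or infinite for every open V is itself open in T. -/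
open Set Topology TopologicalSpace

theorem stmt9 {U : Type*} [Infinite U] (T : TopologicalSpace U)
    (hperf : IsPerfectTop T) :
    IsMaxPerfectTop T ↔
      ∀ X : Set U, (∀ V : Set U, IsOpen[T] V → X ∩ V = ∅ ∨ (X ∩ V).Infinite) →
        IsOpen[T] X := by
  constructor
  · rintro ⟨-, hmax⟩ X hX
    classical
    set T' : TopologicalSpace U :=
      { IsOpen := fun S => ∃ V W : Set U, IsOpen[T] V ∧ IsOpen[T] W ∧ S = V ∪ (X ∩ W)
        isOpen_univ := ⟨univ, ∅, isOpen_univ, isOpen_empty, by simp⟩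
        isOpen_inter := by
          rintro S₁ S₂ ⟨V₁, W₁, hV₁, hW₁, rfl⟩ ⟨V₂, W₂, hV₂, hW₂, rfl⟩
          refine ⟨V₁ ∩ V₂, (V₁ ∩ W₂) ∪ (W₁ ∩ V₂) ∪ (W₁ ∩ W₂),
            hV₁.inter hV₂, ((hV₁.inter hW₂).union (hW₁.inter hV₂)).union (hW₁.inter hW₂), ?_⟩
          ext x; simp only [mem_inter_iff, mem_union]; tauto
        isOpen_sUnion := by
          intro s hs
          choose V W hV hW hEq using hs
          refine ⟨⋃ t, ⋃ h : t ∈ s, V t h, ⋃ t, ⋃ h : t ∈ s, W t h,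
            isOpen_iUnion fun t => isOpen_iUnion fun h => hV t h,
            isOpen_iUnion fun t => isOpen_iUnion fun h => hW t h, ?_⟩
          ext x
          simp only [mem_sUnion, mem_union, mem_iUnion, mem_inter_iff]
          constructor
          · rintro ⟨t, ht, hx⟩
            rw [hEq t ht] at hx
            rcases hx with h | ⟨h1, h2⟩
            · exact Or.inl ⟨t, ht, h⟩
            · exact Or.inr ⟨h1, t, ht, h2⟩
          · rintro (⟨t, ht, h⟩ | ⟨h1, t, ht, h2⟩)
            · exact ⟨t, ht, (hEq t ht) ▸ Or.inl h⟩
            · exact ⟨t, ht, (hEq t ht) ▸ Or.inr ⟨h1, h2⟩⟩ } with hT'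
    have hle : T' ≤ T := by
      intro V hV
      exact ⟨V, ∅, hV, @isOpen_empty U T, by simp⟩
    have hperf' : IsPerfectTop T' := by
      rintro S ⟨V, W, hV, hW, rfl⟩ hne
      rcases V.eq_empty_or_nonempty with hVe | hVne
      · rw [hVe, empty_union] at hne ⊢
        rcases hX W hW with h | h
        · exact absurd h (by exact fun h => hne.ne_empty h)
        · exact h
      · exact (hperf V hV hVne).mono subset_union_left
    have heq : T' = T := hmax T' hle hperf'
    have : IsOpen[T'] X := ⟨∅, univ, @isOpen_empty U T, @isOpen_univ U T, by simp⟩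
    rwa [heq] at this
  · intro h
    refine ⟨hperf, fun T' hle hperf' => ?_⟩
    refine le_antisymm hle fun S hS => ?_
    refine h S fun V hV => ?_
    rcases (S ∩ V).eq_empty_or_nonempty with he | hne
    · exact Or.inl he
    · exact Or.inr (hperf' _ (T'.isOpen_inter _ _ hS (hle V hV)) hne)
end

section
/- If T is a maximal perfect Hausdorff topology on an infinite set U, then every discrete subset of U is closed, where a subset D is discrete if for every x ∈ D there is an open set V with V ∩ D = {x}. -/
open Set Topology TopologicalSpace

/-- The topology obtained from `T` by adding `Dᶜ` as an open set. -/
def finerTop {U : Type*} (T : TopologicalSpace U) (D : Set U) : TopologicalSpace U where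
  IsOpen s := ∃ V W : Set U, IsOpen[T] V ∧ IsOpen[T] W ∧ s = V ∪ (W \ D)
  isOpen_univ := ⟨univ, ∅, isOpen_univ, isOpen_empty, by simp⟩
  isOpen_inter := by
    rintro s t ⟨V₁, W₁, hV₁, hW₁, rfl⟩ ⟨V₂, W₂, hV₂, hW₂, rfl⟩
    refine ⟨V₁ ∩ V₂, (V₁ ∩ W₂) ∪ (W₁ ∩ V₂) ∪ (W₁ ∩ W₂), hV₁.inter hV₂,
      ((hV₁.inter hW₂).union (hW₁.inter hV₂)).union (hW₁.inter hW₂), ?_⟩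
    ext x
    simp only [mem_inter_iff, mem_union, mem_diff]
    tauto
  isOpen_sUnion := by
    intro S hS
    choose V W hV hW hEq using hS
    refine ⟨⋃ s : {s // s ∈ S}, V s s.2, ⋃ s : {s // s ∈ S}, W s s.2,
      isOpen_iUnion fun s => hV s s.2, isOpen_iUnion fun s => hW s s.2, ?_⟩
    ext x
    simp only [mem_sUnion, mem_union, mem_iUnion, mem_diff]
    constructor
    · rintro ⟨s, hs, hx⟩
      rw [hEq s hs] at hx
      rcases hx with h | ⟨h, hd⟩
      · exact Or.inl ⟨⟨s, hs⟩, h⟩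
      · exact Or.inr ⟨⟨⟨s, hs⟩, h⟩, hd⟩
    · rintro (⟨⟨s, hs⟩, h⟩ | ⟨⟨⟨s, hs⟩, h⟩, hd⟩)
      · exact ⟨s, hs, (hEq s hs) ▸ Or.inl h⟩
      · exact ⟨s, hs, (hEq s hs) ▸ Or.inr ⟨h, hd⟩⟩

lemma key {U : Type*} (T : TopologicalSpace U) (hperf : IsPerfectTop T) (D : Set U)
    (hD : ∀ x ∈ D, ∃ V : Set U, IsOpen[T] V ∧ V ∩ D = {x}) :
    ∀ V : Set U, IsOpen[T] V → (V \ D).Nonempty → (V \ D).Infinite := by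
  intro V hV hne
  by_contra hfin
  rw [Set.not_infinite] at hfin
  by_cases hVD : (V ∩ D).Nonempty
  · obtain ⟨x, hxV, hxD⟩ := hVD
    obtain ⟨Vx, hVx, hVxD⟩ := hD x hxD
    have hxVx : x ∈ Vx := by
      have : x ∈ Vx ∩ D := by rw [hVxD]; exact rfl
      exact this.1
    have hinf := hperf (V ∩ Vx) (hV.inter hVx) ⟨x, hxV, hxVx⟩
    have hsub : V ∩ Vx ⊆ insert x (V \ D) := by
      rintro y ⟨hyV, hyVx⟩
      by_cases hyD : y ∈ D
      · have : y ∈ Vx ∩ D := ⟨hyVx, hyD⟩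
        rw [hVxD] at this
        exact Or.inl this
      · exact Or.inr ⟨hyV, hyD⟩
    exact hinf ((hfin.insert x).subset hsub)
  · have hVeq : V \ D = V := by
      ext y
      simp only [mem_diff, and_iff_left_iff_imp]
      intro hy hyD
      exact hVD ⟨y, hy, hyD⟩
    rw [hVeq] at hne hfin
    exact hperf V hV hne hfin

theorem stmt10 {U : Type*} [Infinite U] (T : TopologicalSpace U)
    (hmax : IsMaxPerfectTop T) (hT2 : @T2Space U T) (D : Set U)
    (hD : ∀ x ∈ D, ∃ V : Set U, IsOpen[T] V ∧ V ∩ D = {x}) :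
    IsClosed[T] D := by
  obtain ⟨hperf, hmaxi⟩ := hmax
  have hle : finerTop T D ≤ T := by
    intro s hs
    exact ⟨s, ∅, hs, isOpen_empty, by simp⟩
  have hperf' : IsPerfectTop (finerTop T D) := by
    rintro s ⟨V, W, hV, hW, rfl⟩ hne
    rcases hne with ⟨x, hx | hx⟩
    · exact ((hperf V hV ⟨x, hx⟩).mono subset_union_left)
    · exact ((key T hperf D hD W hW ⟨x, hx⟩).mono subset_union_right)
  have heq := hmaxi (finerTop T D) hle hperf'
  have hopen : IsOpen[finerTop T D] Dᶜ := ⟨∅, univ, isOpen_empty, isOpen_univ, by simp [Set.compl_eq_univ_diff]⟩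
  rw [heq] at hopen
  exact ⟨hopen⟩
end

section
/- If T is a maximal perfect Hausdorff topology on an infinite set U, then (U, T, CD(T)) is a complete Mammen space, where CD(T) is the family of closed discrete subsets of U. -/
open Set Topology TopologicalSpace

/-- Topology generated by adding one set `A` to a topology `T`. -/
private def extTop {U : Type*} (T : TopologicalSpace U) (A : Set U) : TopologicalSpace U where
  IsOpen V := ∃ s t, IsOpen[T] s ∧ IsOpen[T] t ∧ V = s ∪ t ∩ A
  isOpen_univ := ⟨univ, ∅, T.isOpen_univ, @isOpen_empty _ T, by simp⟩
  isOpen_inter := by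
    letI := T
    rintro V W ⟨s1, t1, hs1, ht1, rfl⟩ ⟨s2, t2, hs2, ht2, rfl⟩
    refine ⟨s1 ∩ s2, (s1 ∩ t2) ∪ (t1 ∩ s2) ∪ (t1 ∩ t2), hs1.inter hs2, ?_, ?_⟩
    · exact ((hs1.inter ht2).union (ht1.inter hs2)).union (ht1.inter ht2)
    · ext x
      simp only [mem_inter_iff, mem_union]
      tauto
  isOpen_sUnion := by
    letI := T
    intro S h
    choose s t hs ht hV using h
    refine ⟨⋃ V : S, s V V.2, ⋃ V : S, t V V.2, ?_, ?_, ?_⟩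
    · exact isOpen_iUnion fun V => hs V V.2
    · exact isOpen_iUnion fun V => ht V V.2
    · ext x
      simp only [mem_sUnion, mem_iUnion, mem_union, mem_inter_iff]
      constructor
      · rintro ⟨V, hVS, hxV⟩
        rw [hV V hVS] at hxV
        rcases hxV with h | ⟨h1, h2⟩
        · exact Or.inl ⟨⟨V, hVS⟩, h⟩
        · exact Or.inr ⟨⟨⟨V, hVS⟩, h1⟩, h2⟩
      · rintro (⟨⟨V, hVS⟩, h⟩ | ⟨⟨⟨V, hVS⟩, h1⟩, h2⟩)
        · exact ⟨V, hVS, (hV V hVS) ▸ Or.inl h⟩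
        · exact ⟨V, hVS, (hV V hVS) ▸ Or.inr ⟨h1, h2⟩⟩

/-- In a maximal perfect Hausdorff topology, every set with empty interior has open complement. -/
private theorem compl_open_of_emptyInt {U : Type*} [Infinite U] {T : TopologicalSpace U}
    (hmax : IsMaxPerfectTop T) (hT2 : @T2Space U T) {E : Set U}
    (hE : ∀ V, IsOpen[T] V → V ⊆ E → V = ∅) : IsOpen[T] Eᶜ := by
  have key : ∀ s, IsOpen[T] s → (s ∩ Eᶜ).Nonempty → (s ∩ Eᶜ).Infinite := by
    intro s hs hne
    by_contra hfin
    rw [Set.not_infinite] at hfin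
    letI := T
    have hsne : s.Nonempty := hne.mono inter_subset_left
    have hsinf := hmax.1 s hs hsne
    have hopen : IsOpen (s \ (s ∩ Eᶜ)) := hs.sdiff hfin.isClosed
    have hsub : s \ (s ∩ Eᶜ) ⊆ E := by
      rintro x ⟨hxs, hx⟩
      by_contra hxE
      exact hx ⟨hxs, hxE⟩
    have h0 := hE _ hopen hsub
    have h1 : (s \ (s ∩ Eᶜ)).Nonempty := (hsinf.diff hfin).nonempty
    rw [h0] at h1
    exact h1.ne_empty rfl
  have hle : extTop T Eᶜ ≤ T := by
    rw [TopologicalSpace.le_def]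
    intro V hV
    exact ⟨V, ∅, hV, @isOpen_empty _ T, by simp⟩
  have hperf : IsPerfectTop (extTop T Eᶜ) := by
    rintro V ⟨s, t, hs, ht, rfl⟩ hne
    rcases hne with ⟨x, hx | hx⟩
    · exact (hmax.1 s hs ⟨x, hx⟩).mono subset_union_left
    · exact (key t ht ⟨x, hx⟩).mono subset_union_right
  have heq : extTop T Eᶜ = T := hmax.2 _ hle hperf
  have : IsOpen[extTop T Eᶜ] Eᶜ := ⟨∅, univ, @isOpen_empty _ T, T.isOpen_univ, by simp⟩
  exact heq ▸ this

/-- Sets with empty interior are closed discrete. -/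
private theorem mem_C_of_emptyInt {U : Type*} [Infinite U] {T : TopologicalSpace U}
    (hmax : IsMaxPerfectTop T) (hT2 : @T2Space U T) {E : Set U}
    (hE : ∀ V, IsOpen[T] V → V ⊆ E → V = ∅) :
    IsClosed[T] E ∧ ∀ x ∈ E, ∃ V : Set U, IsOpen[T] V ∧ V ∩ E = {x} := by
  refine ⟨⟨compl_open_of_emptyInt hmax hT2 hE⟩, ?_⟩
  intro x hx
  have h2 : ∀ V, IsOpen[T] V → V ⊆ E \ {x} → V = ∅ :=
    fun V hV hsub => hE V hV (hsub.trans diff_subset)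
  refine ⟨(E \ {x})ᶜ, compl_open_of_emptyInt hmax hT2 h2, ?_⟩
  ext y
  simp only [mem_inter_iff, mem_compl_iff, mem_diff, mem_singleton_iff, not_and, not_not]
  constructor
  · rintro ⟨h1, h2⟩
    exact h1 h2
  · rintro rfl
    exact ⟨fun _ => rfl, hx⟩

/-- Closed discrete sets have empty interior (in a perfect topology). -/
private theorem emptyInt_of_mem_C {U : Type*} {T : TopologicalSpace U}
    (hperf : IsPerfectTop T) {D : Set U}
    (hD : ∀ x ∈ D, ∃ V : Set U, IsOpen[T] V ∧ V ∩ D = {x}) :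
    ∀ V, IsOpen[T] V → V ⊆ D → V = ∅ := by
  letI := T
  intro V hV hsub
  by_contra hne
  rw [← Ne, ← nonempty_iff_ne_empty] at hne
  obtain ⟨x, hx⟩ := hne
  obtain ⟨W, hW, hWD⟩ := hD x (hsub hx)
  have hxW : x ∈ W := by
    have : x ∈ W ∩ D := hWD ▸ rfl
    exact this.1
  have hinf : (V ∩ W).Infinite := hperf _ (hV.inter hW) ⟨x, hx, hxW⟩
  have hsub2 : V ∩ W ⊆ {x} := fun y ⟨h1, h2⟩ => hWD ▸ (⟨h2, hsub h1⟩ : y ∈ W ∩ D)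
  exact (finite_singleton x).not_infinite (hinf.mono hsub2)

theorem stmt12 {U : Type*} [Infinite U] (T : TopologicalSpace U)
    (hmax : IsMaxPerfectTop T) (hT2 : @T2Space U T) :
    IsMammen T {D : Set U | IsClosed[T] D ∧
        ∀ x ∈ D, ∃ V : Set U, IsOpen[T] V ∧ V ∩ D = {x}} ∧
      MammenComplete T {D : Set U | IsClosed[T] D ∧
        ∀ x ∈ D, ∃ V : Set U, IsOpen[T] V ∧ V ∩ D = {x}} := by
  set C : Set (Set U) := {D : Set U | IsClosed[T] D ∧
        ∀ x ∈ D, ∃ V : Set U, IsOpen[T] V ∧ V ∩ D = {x}} with hC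
  have memC : ∀ {E : Set U}, (∀ V, IsOpen[T] V → V ⊆ E → V = ∅) → E ∈ C :=
    fun hE => mem_C_of_emptyInt hmax hT2 hE
  have emptyInt : ∀ {D : Set U}, D ∈ C → ∀ V, IsOpen[T] V → V ⊆ D → V = ∅ :=
    fun hD => emptyInt_of_mem_C hmax.1 hD.2
  have singC : ∀ x : U, ({x} : Set U) ∈ C := by
    intro x
    apply memC
    intro V hV hsub
    by_contra hne
    rw [← Ne, ← nonempty_iff_ne_empty] at hne
    exact ((finite_singleton x).subset hsub).not_infinite (hmax.1 V hV hne)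
  constructor
  · refine ⟨inferInstance, hmax.1, hT2, ?_, ?_, ?_, ?_, ?_, ?_, ?_⟩
    · obtain ⟨x⟩ : Nonempty U := inferInstance
      exact ⟨{x}, singC x, singleton_nonempty x⟩
    · -- unions
      intro c hc d hd
      apply memC
      intro V hV hsub
      letI := T
      have h1 : V ∩ cᶜ = ∅ := by
        refine emptyInt hd _ (hV.inter hc.1.isOpen_compl) ?_
        rintro x ⟨hx1, hx2⟩
        exact (hsub hx1).resolve_left hx2
      have h2 : V ⊆ c := by
        intro x hx
        by_contra hxc
        exact absurd (h1 ▸ (⟨hx, hxc⟩ : x ∈ V ∩ cᶜ)) (notMem_empty x)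
      exact emptyInt hc V hV h2
    · -- intersections
      intro c hc d hd
      exact memC fun V hV hsub => emptyInt hc V hV (hsub.trans inter_subset_left)
    · -- singletons
      rintro c _ ⟨x, hx⟩
      exact ⟨x, hx, singC x⟩
    · exact memC fun V hV hsub => subset_empty_iff.mp hsub
    · intro s hs hsopen
      exact emptyInt hs s hsopen subset_rfl
    · intro c hc s _
      exact memC fun V hV hsub => emptyInt hc V hV (hsub.trans inter_subset_left)
  · intro X
    letI := T
    refine ⟨interior X, X \ interior X, isOpen_interior, ?_, (union_diff_cancel interior_subset).symm⟩
    apply memC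
    intro V hV hsub
    have h1 : V ⊆ interior X :=
      interior_maximal (hsub.trans (diff_subset.trans subset_rfl)) hV
    have h2 : V ⊆ (interior X)ᶜ := fun x hx => (hsub hx).2
    ext x
    simp only [mem_empty_iff_false, iff_false]
    exact fun hx => h2 hx (h1 hx)
end

section
/- If T is a maximal perfect Hausdorff topology on an infinite set U, then the following classes of subsets of U coincide: the nowhere dense sets, the closed discrete sets, and the sets with empty interior. -/
open Set Topology TopologicalSpace

lemma key_closed {U : Type*} (T : TopologicalSpace U)
    (hmax : IsMaxPerfectTop T) (hT2 : @T2Space U T) (X : Set U)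
    (hX : @interior U T X = ∅) : IsClosed[T] X := by
  obtain ⟨hperf0, hmaxi⟩ := hmax
  letI := T
  haveI := hT2
  -- every nonempty open set has infinite complement part
  have hdiff : ∀ V : Set U, IsOpen V → V.Nonempty → (V \ X).Infinite := by
    intro V hV hne
    by_contra hfin
    rw [Set.not_infinite] at hfin
    have hopen : IsOpen (V ∩ X) := by
      have : V ∩ X = V ∩ (V \ X)ᶜ := by ext y; simp; tauto
      rw [this]
      exact hV.inter hfin.isClosed.isOpen_compl
    have hsub : V ∩ X ⊆ interior X :=
      interior_maximal (inter_subset_right) hopen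
    have hVsub : V ⊆ V \ X := by
      intro y hy
      rcases Classical.em (y ∈ X) with h | h
      · exact absurd (hsub ⟨hy, h⟩) (by rw [hX]; simp)
      · exact ⟨hy, h⟩
    exact hperf0 V hV hne (hfin.subset hVsub)
  set G : Set (Set U) := {s | IsOpen[T] s} ∪ {Xᶜ} with hG
  have hle : generateFrom G ≤ T := by
    calc generateFrom G ≤ generateFrom {s | IsOpen[T] s} :=
          generateFrom_anti (subset_union_left)
      _ = T := generateFrom_setOf_isOpen T
  have hstruct : ∀ s : Set U, IsOpen[generateFrom G] s →
      ∀ x ∈ s, ∃ V, IsOpen[T] V ∧ x ∈ V ∧ (V ⊆ s ∨ (x ∉ X ∧ V \ X ⊆ s)) := by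
    intro s hs
    induction hs with
    | basic u hu =>
      rcases hu with hu | hu
      · exact fun x hx => ⟨u, hu, hx, Or.inl (subset_refl u)⟩
      · simp only [mem_singleton_iff] at hu
        subst hu
        exact fun x hx => ⟨univ, isOpen_univ, mem_univ x,
          Or.inr ⟨hx, by intro y hy; exact hy.2⟩⟩
    | univ => exact fun x hx => ⟨univ, isOpen_univ, mem_univ x, Or.inl (subset_refl _)⟩
    | inter u v hu hv ihu ihv =>
      intro x hx
      obtain ⟨V₁, hV₁, hxV₁, h₁⟩ := ihu x hx.1
      obtain ⟨V₂, hV₂, hxV₂, h₂⟩ := ihv x hx.2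
      refine ⟨V₁ ∩ V₂, hV₁.inter hV₂, ⟨hxV₁, hxV₂⟩, ?_⟩
      rcases h₁ with h₁ | ⟨hxX, h₁⟩
      · rcases h₂ with h₂ | ⟨hxX, h₂⟩
        · exact Or.inl fun y hy => ⟨h₁ hy.1, h₂ hy.2⟩
        · exact Or.inr ⟨hxX, fun y hy => ⟨h₁ hy.1.1, h₂ ⟨hy.1.2, hy.2⟩⟩⟩
      · rcases h₂ with h₂ | ⟨_, h₂⟩
        · exact Or.inr ⟨hxX, fun y hy => ⟨h₁ ⟨hy.1.1, hy.2⟩, h₂ hy.1.2⟩⟩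
        · exact Or.inr ⟨hxX, fun y hy => ⟨h₁ ⟨hy.1.1, hy.2⟩, h₂ ⟨hy.1.2, hy.2⟩⟩⟩
    | sUnion S hS ihS =>
      intro x hx
      obtain ⟨t, htS, hxt⟩ := hx
      obtain ⟨V, hV, hxV, h⟩ := ihS t htS x hxt
      refine ⟨V, hV, hxV, ?_⟩
      rcases h with h | ⟨hxX, h⟩
      · exact Or.inl (h.trans (subset_sUnion_of_mem htS))
      · exact Or.inr ⟨hxX, h.trans (subset_sUnion_of_mem htS)⟩
  have hperf : IsPerfectTop (generateFrom G) := by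
    intro s hs hne
    obtain ⟨x, hx⟩ := hne
    obtain ⟨V, hV, hxV, h⟩ := hstruct s hs x hx
    rcases h with h | ⟨_, h⟩
    · exact (hperf0 V hV ⟨x, hxV⟩).mono h
    · exact (hdiff V hV ⟨x, hxV⟩).mono h
  have hTT : generateFrom G = T := hmaxi _ hle hperf
  have : IsOpen[generateFrom G] Xᶜ := GenerateOpen.basic _ (Or.inr rfl)
  rw [hTT] at this
  exact isOpen_compl_iff.mp this

theorem stmt13 {U : Type*} [Infinite U] (T : TopologicalSpace U)
    (hmax : IsMaxPerfectTop T) (hT2 : @T2Space U T) (X : Set U) :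
    (@interior U T (@closure U T X) = ∅ ↔
      IsClosed[T] X ∧ ∀ x ∈ X, ∃ V : Set U, IsOpen[T] V ∧ V ∩ X = {x}) ∧
    (@interior U T (@closure U T X) = ∅ ↔ @interior U T X = ∅) := by
  obtain ⟨hperf0, hmaxi⟩ := hmax
  letI := T
  haveI := hT2
  have hint : @interior U T (@closure U T X) = ∅ → interior X = ∅ := by
    intro h
    exact eq_empty_of_subset_empty (h ▸ interior_mono subset_closure)
  constructor
  · constructor
    · intro h
      have hXi := hint h
      have hcl := key_closed T ⟨hperf0, hmaxi⟩ hT2 X hXi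
      refine ⟨hcl, ?_⟩
      intro x hx
      have h2 : interior (X \ {x}) = ∅ :=
        eq_empty_of_subset_empty (hXi ▸ interior_mono diff_subset)
      have hcl2 := key_closed T ⟨hperf0, hmaxi⟩ hT2 (X \ {x}) h2
      refine ⟨(X \ {x})ᶜ, hcl2.isOpen_compl, ?_⟩
      ext y
      simp only [mem_inter_iff, mem_compl_iff, mem_diff, mem_singleton_iff]
      constructor
      · rintro ⟨h1, h2⟩; tauto
      · rintro rfl; tauto
    · rintro ⟨hcl, hdisc⟩
      rw [hcl.closure_eq]
      by_contra h
      obtain ⟨v, hv⟩ := nonempty_iff_ne_empty.mpr h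
      have hvX : v ∈ X := interior_subset hv
      obtain ⟨V, hVopen, hVX⟩ := hdisc v hvX
      have hvV : v ∈ V := by
        have : v ∈ V ∩ X := by rw [hVX]; rfl
        exact this.1
      have hinf : (V ∩ interior X).Infinite :=
        hperf0 _ (hVopen.inter isOpen_interior) ⟨v, hvV, hv⟩
      have hsub : V ∩ interior X ⊆ {v} := by
        rw [← hVX]; exact inter_subset_inter_right _ interior_subset
      exact hinf ((finite_singleton v).subset hsub)
  · constructor
    · exact hint
    · intro h
      rw [(key_closed T ⟨hperf0, hmaxi⟩ hT2 X h).closure_eq]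
      exact h
end

section
/- Every perfect topology on an infinite set U extends to a maximal perfect topology on U (using the axiom of choice via Zorn's lemma). -/
open Set Topology TopologicalSpace

theorem stmt14 {U : Type*} [Infinite U] (T : TopologicalSpace U)
    (hperf : IsPerfectTop T) :
    ∃ T' : TopologicalSpace U, T' ≤ T ∧ IsMaxPerfectTop T' := by
  set S : Set (TopologicalSpace U) := {T' | T' ≤ T ∧ IsPerfectTop T'} with hS
  have key : ∀ c ⊆ S, IsChain (· ≤ ·) c → c.Nonempty → ∃ lb ∈ S, ∀ z ∈ c, lb ≤ z := by
    intro c hcS hchain ⟨y, hy⟩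
    refine ⟨sInf c, ⟨le_trans (sInf_le hy) (hcS hy).1, ?_⟩, fun z hz => sInf_le hz⟩
    set B : Set (Set U) := ⋃ t : c, {s | IsOpen[(t : TopologicalSpace U)] s} with hB
    have heq : sInf c = TopologicalSpace.generateFrom B :=
      (sInf_eq_iInf' c).trans (generateFrom_iUnion_isOpen _).symm
    have hinter : ∀ ⦃s⦄, s ∈ B → ∀ ⦃t⦄, t ∈ B → s ∩ t ∈ B := by
      rintro s hs t ht
      obtain ⟨t₁, hs⟩ := mem_iUnion.1 hs
      obtain ⟨t₂, ht⟩ := mem_iUnion.1 ht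
      have hs' : IsOpen[(t₁ : TopologicalSpace U)] s := hs
      have ht' : IsOpen[(t₂ : TopologicalSpace U)] t := ht
      rcases hchain.total t₁.2 t₂.2 with h | h
      · refine mem_iUnion.2 ⟨t₁, ?_⟩
        letI : TopologicalSpace U := (t₁ : TopologicalSpace U)
        exact hs'.inter (ht'.mono h)
      · refine mem_iUnion.2 ⟨t₂, ?_⟩
        letI : TopologicalSpace U := (t₂ : TopologicalSpace U)
        exact (hs'.mono h).inter ht'
    intro V hV hVne
    rw [heq] at hV
    obtain ⟨x, hx⟩ := hVne
    letI : TopologicalSpace U := TopologicalSpace.generateFrom B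
    have hbasis := TopologicalSpace.isTopologicalBasis_of_subbasis_of_inter
      (t := TopologicalSpace.generateFrom B) rfl hinter
    obtain ⟨v, hvB, hxv, hvV⟩ := hbasis.exists_subset_of_mem_open hx hV
    rcases hvB with rfl | hvB
    · exact Set.infinite_univ.mono hvV
    · obtain ⟨t₁, hv⟩ := mem_iUnion.1 hvB
      exact ((hcS t₁.2).2 v hv ⟨x, hxv⟩).mono hvV
  obtain ⟨m, hTm, hmS, hmax⟩ := zorn_le_nonempty₀ (α := (TopologicalSpace U)ᵒᵈ) S
    (fun c hc hchain y hy => by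
      obtain ⟨lb, hlbS, hlb⟩ := key c hc hchain.symm ⟨y, hy⟩
      exact ⟨lb, hlbS, fun z hz => hlb z hz⟩) T ⟨le_refl T, hperf⟩
  refine ⟨m, hmS.1, hmS.2, fun T'' hT'' hperf'' => ?_⟩
  exact le_antisymm hT'' (hmax (y := T'') ⟨le_trans hT'' hmS.1, hperf''⟩ hT'')
end

section
/- Assume all subsets of Cantor space 2^ℕ are Baire measurable (have the property of Baire). Then there is no complete Mammen space with universe ℕ. -/
open Set Topology TopologicalSpace

/-!
Completeness of a Mammen space on `U` gives, for every `X ⊆ U`, a nonempty open set inside `X`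
or inside `Xᶜ`. Hence for every `f : U → Bool`, either `f` or its complement `!f` is `true` on a
punctured neighbourhood of some point `x`. For fixed `x`, the set of such `f` is invariant under
finite modifications (finite sets are closed) and never contains both `f` and `!f` (punctured
neighbourhoods are nonempty by perfectness). By the topological zero-one law it is meagre once
it has the property of Baire, so for countable `U` the Cantor space `U → Bool` would be a
countable union of meagre sets, contradicting the Baire category theorem.
-/

open Filter

lemma IsMeagre.preimage_homeomorph {X Y : Type*} [TopologicalSpace X] [TopologicalSpace Y]
    (h : X ≃ₜ Y) {s : Set Y} (hs : IsMeagre s) : IsMeagre (h ⁻¹' s) :=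
  hs.preimage_of_isOpenMap h.continuous h.isOpenMap

theorem BaireMeasurableSet.exists_isOpen_diff_isMeagre {X : Type*} [TopologicalSpace X]
    {s : Set X} (hs : BaireMeasurableSet s) (hns : ¬IsMeagre s) :
    ∃ u, IsOpen u ∧ u.Nonempty ∧ IsMeagre (u \ s) := by
  obtain ⟨u, hu, hsu⟩ := hs.residualEq_isOpen
  have hsu' := eventuallyEq_set.mp hsu
  refine ⟨u, hu, Set.nonempty_iff_ne_empty.mpr ?_, hsu'.mono fun x hx hxu => hxu.2 (hx.2 hxu.1)⟩
  rintro rfl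
  exact hns (hsu'.mono fun x hx hxs => (hx.1 hxs).elim)

namespace Cantor

variable {ι : Type*}

def flipBy (c : ι → Bool) : (ι → Bool) ≃ₜ (ι → Bool) where
  toFun g i := xor (g i) (c i)
  invFun g i := xor (g i) (c i)
  left_inv g := by funext i; simp
  right_inv g := by funext i; simp
  continuous_toFun := by fun_prop
  continuous_invFun := by fun_prop

@[simp]
lemma flipBy_apply (c g : ι → Bool) (i : ι) : flipBy c g i = xor (g i) (c i) := rfl

@[simp]
lemma flipBy_true (g : ι → Bool) : flipBy (fun _ => true) g = fun i => !g i := by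
  ext; simp

lemma exists_finset_forall_eq_mem {V : Set (ι → Bool)} (hV : IsOpen V) {f : ι → Bool}
    (hf : f ∈ V) : ∃ I : Finset ι, ∀ g : ι → Bool, (∀ i ∈ I, g i = f i) → g ∈ V := by
  obtain ⟨I, u, hu, hIu⟩ := isOpen_pi_iff.mp hV f hf
  exact ⟨I, fun g hg => hIu fun i hi => hg i hi ▸ (hu i hi).2⟩

theorem isMeagre_of_finite_invariant {M : Set (ι → Bool)} (hM : BaireMeasurableSet M)
    (hinv : ∀ f g : ι → Bool, {i | f i ≠ g i}.Finite → f ∈ M → g ∈ M)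
    (hdisj : ∀ f ∈ M, (fun i => !f i) ∉ M) : IsMeagre M := by
  classical
  by_contra hnm
  obtain ⟨V, hV, ⟨f, hfV⟩, hVM⟩ := hM.exists_isOpen_diff_isMeagre hnm
  obtain ⟨I, hI⟩ := exists_finset_forall_eq_mem hV hfV
  -- `ρ`, flipping the coordinates outside `I`, keeps `f` in the cylinder of `f` on `I` and
  -- differs from the total flip only on `I`; so `ρ g ∈ M` forces `g ∉ M`.
  set ρ := flipBy fun i => decide (i ∉ I)
  have hρ_ne : ∀ g, {i | ρ g i ≠ !g i} ⊆ I := fun g i hi => by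
    by_contra hiI
    exact hi (by simp [ρ, show i ∉ I from hiI])
  have hρ : ∀ g, ρ g ∈ M → g ∉ M := fun g hg hgM =>
    hdisj g hgM (hinv _ _ (I.finite_toSet.subset (hρ_ne g)) hg)
  have hW : IsMeagre (V ∩ ρ ⁻¹' V) := by
    refine (hVM.union (hVM.preimage_homeomorph ρ)).mono ?_
    rintro g ⟨hgV, hρgV⟩
    by_cases hg : g ∈ M
    · exact Or.inr ⟨hρgV, fun hρg => hρ g hρg hg⟩
    · exact Or.inl ⟨hgV, hg⟩
  refine not_isMeagre_of_isOpen (hV.inter (hV.preimage ρ.continuous)) ⟨f, hfV, hI _ ?_⟩ hW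
  intro i hi
  simp [ρ, hi]

end Cantor

section Mammen

variable {U : Type*} [T : TopologicalSpace U] {C : Set (Set U)}

lemma IsPerfectTop.neBot_nhdsNE (hT : IsPerfectTop T) (x : U) : (𝓝[≠] x).NeBot := by
  rw [neBot_iff, Ne, ← isOpen_singleton_iff_punctured_nhds]
  exact fun hx => hT {x} hx (singleton_nonempty x) (finite_singleton x)

lemma IsMammen.interior_nonempty_or_interior_compl_nonempty (hM : IsMammen T C)
    (hC : MammenComplete T C) (X : Set U) :
    (interior X).Nonempty ∨ (interior Xᶜ).Nonempty := by
  by_contra! h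
  have hempty : ∀ Y, interior Y = ∅ → Y ∈ C := fun Y hY => by
    obtain ⟨s, c, hs, hc, rfl⟩ := hC Y
    have hs_sub : s ⊆ interior (s ∪ c) := interior_maximal subset_union_left hs
    rw [hY, subset_empty_iff] at hs_sub
    rwa [hs_sub, empty_union]
  have huniv := hM.unionMem _ (hempty X h.1) _ (hempty Xᶜ h.2)
  rw [union_compl_self] at huniv
  have := hM.nonemptyU
  exact univ_nonempty.ne_empty (hM.openInterC univ huniv isOpen_univ)

def trueNear (x : U) : Set (U → Bool) := {f | ∀ᶠ y in 𝓝[≠] x, f y = true}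

lemma mem_trueNear {x : U} {f : U → Bool} : f ∈ trueNear x ↔ ∀ᶠ y in 𝓝[≠] x, f y = true :=
  Iff.rfl

lemma mem_trueNear_of_finite_ne [T1Space U] {x : U} {f g : U → Bool}
    (hfg : {y | f y ≠ g y}.Finite) (hf : f ∈ trueNear x) : g ∈ trueNear x :=
  mem_of_superset (nhdsNE_of_nhdsNE_sdiff_finite hf hfg) fun y ⟨hfy, hy⟩ =>
    show g y = true from (of_not_not hy : f y = g y) ▸ hfy

lemma bnot_notMem_trueNear {x : U} [(𝓝[≠] x).NeBot] {f : U → Bool} (hf : f ∈ trueNear x) :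
    (fun y => !f y) ∉ trueNear x := by
  intro hnf
  obtain ⟨y, hfy, hnfy⟩ := (mem_trueNear.mp hf).and hnf |>.exists
  simp_all

lemma isMeagre_trueNear [T1Space U] (hT : IsPerfectTop T)
    (hBaire : ∀ X : Set (U → Bool), BaireMeasurableSet X) (x : U) : IsMeagre (trueNear x) :=
  have := hT.neBot_nhdsNE x
  Cantor.isMeagre_of_finite_invariant (hBaire _) (fun _ _ => mem_trueNear_of_finite_ne)
    fun _ => bnot_notMem_trueNear

lemma IsMammen.exists_mem_trueNear (hM : IsMammen T C) (hC : MammenComplete T C)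
    (f : U → Bool) : ∃ x, f ∈ trueNear x ∨ (fun y => !f y) ∈ trueNear x := by
  rcases hM.interior_nonempty_or_interior_compl_nonempty hC {y | f y = true} with
    ⟨x, hx⟩ | ⟨x, hx⟩
  · exact ⟨x, .inl (mem_nhdsWithin_of_mem_nhds (mem_interior_iff_mem_nhds.mp hx))⟩
  · refine ⟨x, .inr (mem_of_superset (mem_nhdsWithin_of_mem_nhds
      (mem_interior_iff_mem_nhds.mp hx)) fun y hy => ?_)⟩
    simpa using hy

theorem IsMammen.not_mammenComplete [Countable U]
    (hBaire : ∀ X : Set (U → Bool), BaireMeasurableSet X) (hM : IsMammen T C) :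
    ¬MammenComplete T C := by
  intro hC
  have := hM.hausdorff
  have hcover : univ ⊆ ⋃ x, trueNear x ∪ Cantor.flipBy (fun _ => true) ⁻¹' trueNear x :=
    fun f _ => by simpa using hM.exists_mem_trueNear hC f
  refine not_isMeagre_of_isOpen isOpen_univ univ_nonempty (IsMeagre.mono hcover ?_)
  refine isMeagre_iUnion fun x => ?_
  have hx := isMeagre_trueNear hM.perfect hBaire x
  exact hx.union (hx.preimage_homeomorph _)

end Mammen

theorem stmt16 (hBaire : ∀ X : Set (ℕ → Bool), BaireMeasurableSet X) :
    ¬ ∃ (T : TopologicalSpace ℕ) (C : Set (Set ℕ)),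
      IsMammen T C ∧ MammenComplete T C := by
  rintro ⟨T, C, hM, hC⟩
  exact hM.not_mammenComplete (T := T) hBaire hC
end

section
/- Let S be a perfect Hausdorff topology on ℕ forming part of a Mammen space (ℕ, S, C), and for n ∈ ℕ define A_n = {A ⊆ ℕ : for all V ∈ S, n ∈ V implies V ∩ A is infinite}. Then every subset A of ℕ satisfies A ∈ A_n or (ℕ \ A) ∈ A_n. -/
open Set Topology TopologicalSpace

/-- Two open neighbourhoods of a point meet in an infinite open set, which cannot be covered by
the finite sets `V ∩ A` and `W ∩ Aᶜ`. -/
theorem IsPerfectTop.infinite_inter_or_infinite_inter_compl {U : Type*} {T : TopologicalSpace U}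
    (hT : IsPerfectTop T) (x : U) (A : Set U) :
    (∀ V : Set U, IsOpen[T] V → x ∈ V → (V ∩ A).Infinite) ∨
    (∀ V : Set U, IsOpen[T] V → x ∈ V → (V ∩ Aᶜ).Infinite) := by
  by_contra! ⟨⟨V, hV, hxV, hVA⟩, ⟨W, hW, hxW, hWA⟩⟩
  have hVW : (V ∩ W).Infinite := hT _ (hV.inter hW) ⟨x, hxV, hxW⟩
  have hcover : V ∩ W ⊆ (V ∩ A) ∪ (W ∩ Aᶜ) := fun y ⟨hyV, hyW⟩ => by
    by_cases hyA : y ∈ A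
    exacts [Or.inl ⟨hyV, hyA⟩, Or.inr ⟨hyW, hyA⟩]
  exact hVW ((hVA.union hWA).subset hcover)

theorem stmt17 (T : TopologicalSpace ℕ) (C : Set (Set ℕ))
    (h : IsMammen T C) (n : ℕ) (A : Set ℕ) :
    (∀ V : Set ℕ, IsOpen[T] V → n ∈ V → (V ∩ A).Infinite) ∨
    (∀ V : Set ℕ, IsOpen[T] V → n ∈ V → (V ∩ Aᶜ).Infinite) :=
  h.perfect.infinite_inter_or_infinite_inter_compl n A
end

section
/- Let T be a perfect topology on ℕ such that for every n ∈ ℕ, the family T*(n) = {V \ {n} : V ∈ T, n ∈ V} is a filter basis generating an ultrafilter on ℕ \ {n}. Then T is a maximal perfect topology. -/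
open Set Topology TopologicalSpace

variable {U : Type*}

theorem IsPerfectTop.exists_mem_ne {T : TopologicalSpace U} (hT : IsPerfectTop T) {W : Set U}
    (hW : IsOpen[T] W) {n : U} (hn : n ∈ W) : ∃ x ∈ W, x ≠ n :=
  (hT W hW ⟨n, hn⟩).nontrivial.exists_ne n

/-- The hypothesis on `T` says that for each `n` the traces `V \ {n}` of the open
neighbourhoods of `n` generate an ultrafilter on `{n}ᶜ`. A `T'`-open `W ∋ n` meets every such
trace (perfectness of `T'`), so the trace filter contains `W \ {n}` and `W` is a `T`-neighbourhood
of `n`. -/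
theorem IsPerfectTop.eq_of_le_of_ultra {T T' : TopologicalSpace U}
    (hultra : ∀ n : U, ∀ A : Set U, A ⊆ {n}ᶜ →
      (∃ V : Set U, IsOpen[T] V ∧ n ∈ V ∧ V \ {n} ⊆ A) ∨
      (∃ V : Set U, IsOpen[T] V ∧ n ∈ V ∧ V \ {n} ⊆ {n}ᶜ \ A))
    (hT' : IsPerfectTop T') (hle : T' ≤ T) : T' = T := by
  refine le_antisymm hle fun W hW => (@isOpen_iff_forall_mem_open U T W).2 fun n hn => ?_
  rcases hultra n (W \ {n}) (fun _ hx => hx.2) with ⟨V, hV, hnV, hsub⟩ | ⟨V, hV, hnV, hsub⟩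
  · refine ⟨V, ?_, hV, hnV⟩
    rwa [sdiff_singleton_subset_iff, insert_sdiff_singleton, insert_eq_of_mem hn] at hsub
  · obtain ⟨x, ⟨hxV, hxW⟩, hxn⟩ := hT'.exists_mem_ne ((hV.mono hle).inter hW) ⟨hnV, hn⟩
    exact ((hsub ⟨hxV, hxn⟩).2 ⟨hxW, hxn⟩).elim

theorem stmt18 (T : TopologicalSpace ℕ) (hperf : IsPerfectTop T)
    (hultra : ∀ n : ℕ, ∀ A : Set ℕ, A ⊆ {n}ᶜ →
      (∃ V : Set ℕ, IsOpen[T] V ∧ n ∈ V ∧ V \ {n} ⊆ A) ∨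
      (∃ V : Set ℕ, IsOpen[T] V ∧ n ∈ V ∧ V \ {n} ⊆ {n}ᶜ \ A)) :
    IsMaxPerfectTop T :=
  ⟨hperf, fun _ hle hperf' => hperf'.eq_of_le_of_ultra hultra hle⟩
end

section
/- If (ℕ, S, C) is a complete Mammen space, then the cardinality of S is at least add(M), the additivity of the meager ideal on Cantor space. In particular, S is uncountable. -/
open Set Topology TopologicalSpace

/-- The additivity of the meager ideal on Cantor space: the least cardinality of a
family of meager sets whose union is non-meager. -/
noncomputable def addMeager : Cardinal :=
  sInf {c : Cardinal | ∃ (ι : Type) (F : ι → Set (ℕ → Bool)),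
    Cardinal.mk ι = c ∧ (∀ i, IsMeagre (F i)) ∧ ¬ IsMeagre (⋃ i, F i)}

/-! If `S` had fewer than `add(M)` open sets, then a generic `x ∈ 2^ℕ` would split every
nonempty open set `V` (meet both `{n ∈ V | x n}` and `{n ∈ V | ¬ x n}` infinitely often), since
each open set is infinite by perfectness and splitting it is a comeager condition. Completeness
writes the fibre `{n | x n = b}` as `s ∪ c` with `s` open and `c ∈ C`; as `x` is constant on `s`,
`s` cannot be split, so `s = ∅` and both fibres lie in `C`. Their union `ℕ` is then an open member
of `C`, which is impossible. -/

def Splits {U : Type*} (x : U → Bool) (V : Set U) : Prop :=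
  ∀ b, {n ∈ V | x n = b}.Infinite

section CantorSpace

variable {α : Type*} [TopologicalSpace α]

lemma dense_setOf_exists_ge_eq {V : Set ℕ} (hV : V.Infinite) (b : α) (m : ℕ) :
    Dense {x : ℕ → α | ∃ n ∈ V, m ≤ n ∧ x n = b} := by
  choose n hnV hn using fun k => hV.exists_gt (k + m)
  refine fun y => mem_closure_of_tendsto (b := Filter.atTop)
    (f := fun k => Function.update y (n k) b) ?_
    (Filter.Eventually.of_forall fun k =>
      ⟨n k, hnV k, by have := hn k; omega, Function.update_self _ _ _⟩)
  refine tendsto_pi_nhds.2 fun i => tendsto_const_nhds.congr' ?_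
  filter_upwards [Filter.eventually_ge_atTop i] with k hk
  rw [Function.update_of_ne (by have := hn k; omega)]

variable [DiscreteTopology α]

lemma isOpen_setOf_exists_ge_eq (V : Set ℕ) (b : α) (m : ℕ) :
    IsOpen {x : ℕ → α | ∃ n ∈ V, m ≤ n ∧ x n = b} := by
  have : {x : ℕ → α | ∃ n ∈ V, m ≤ n ∧ x n = b} = ⋃ n ∈ V ∩ Ici m, (fun x => x n) ⁻¹' {b} := by
    ext x; simp [and_assoc]
  rw [this]
  exact isOpen_biUnion fun n _ => (continuous_apply n).isOpen_preimage _ (isOpen_discrete _)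

lemma setOf_infinite_fiber_mem_residual {V : Set ℕ} (hV : V.Infinite) (b : α) :
    {x : ℕ → α | {n ∈ V | x n = b}.Infinite} ∈ residual (ℕ → α) := by
  refine Filter.mem_of_superset (countable_iInter_mem.2 fun m => residual_of_dense_open
    (isOpen_setOf_exists_ge_eq V b (m + 1)) (dense_setOf_exists_ge_eq hV b (m + 1))) ?_
  intro x hx
  refine infinite_of_forall_exists_gt fun m => ?_
  obtain ⟨n, hnV, hmn, hxn⟩ := mem_iInter.1 hx m
  exact ⟨n, ⟨hnV, hxn⟩, hmn⟩

end CantorSpace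

lemma setOf_splits_mem_residual {V : Set ℕ} (hV : V.Infinite) :
    {x : ℕ → Bool | Splits x V} ∈ residual (ℕ → Bool) := by
  simp only [Splits, ofPred_forall]
  exact countable_iInter_mem.2 (setOf_infinite_fiber_mem_residual hV)

lemma iInter_mem_residual_of_mk_lt_addMeager {ι : Type} {F : ι → Set (ℕ → Bool)}
    (hι : Cardinal.mk ι < addMeager) (hF : ∀ i, F i ∈ residual (ℕ → Bool)) :
    ⋂ i, F i ∈ residual (ℕ → Bool) := by
  by_contra hnot
  refine hι.not_ge (csInf_le' ⟨ι, fun i => (F i)ᶜ, rfl, fun i => ?_, ?_⟩)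
  · rw [IsMeagre, compl_compl]
    exact hF i
  · rwa [IsMeagre, compl_iUnion, iInter_congr fun i => compl_compl (F i)]

lemma IsMammen.exists_isOpen_not_splits {U : Type*} {T : TopologicalSpace U} {C : Set (Set U)}
    (h : IsMammen T C) (hcomp : MammenComplete T C) (x : U → Bool) :
    ∃ V, IsOpen[T] V ∧ V.Nonempty ∧ ¬ Splits x V := by
  by_contra! hx
  have fiber_mem : ∀ b, {n | x n = b} ∈ C := by
    intro b
    obtain ⟨s, c, hs, hc, hfib⟩ := hcomp {n | x n = b}
    obtain rfl : s = ∅ := by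
      by_contra hne
      refine hx s hs (nonempty_iff_ne_empty.2 hne) (!b) (finite_empty.subset ?_)
      rintro n ⟨hns, hxn⟩
      have hxb : x n = b := hfib.ge (mem_union_left c hns)
      simp [hxb] at hxn
    rwa [hfib, empty_union]
  have huniv : {n | x n = true} ∪ {n | x n = false} = univ := by
    ext n; cases x n <;> simp
  have hempty := h.openInterC _ (h.unionMem _ (fiber_mem true) _ (fiber_mem false))
    (huniv ▸ @isOpen_univ U T)
  have := h.nonemptyU
  exact empty_ne_univ (hempty.symm.trans huniv)

theorem stmt19 (T : TopologicalSpace ℕ) (C : Set (Set ℕ))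
    (h : IsMammen T C) (hcomp : MammenComplete T C) :
    addMeager ≤ Cardinal.mk {V : Set ℕ | IsOpen[T] V} ∧
      ¬ Set.Countable {V : Set ℕ | IsOpen[T] V} := by
  let W := {V : Set ℕ | IsOpen[T] V ∧ V.Nonempty}
  have hW : W ⊆ {V | IsOpen[T] V} := fun V hV => hV.1
  have hres : ∀ V : W, {x | Splits x V} ∈ residual (ℕ → Bool) :=
    fun V => setOf_splits_mem_residual (h.perfect V V.2.1 V.2.2)
  have hnot : ⋂ V : W, {x | Splits x V} ∉ residual (ℕ → Bool) := by
    intro hmem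
    obtain ⟨x, hx⟩ := (dense_of_mem_residual hmem).nonempty
    obtain ⟨V, hV, hne, hns⟩ := h.exists_isOpen_not_splits hcomp x
    exact hns (mem_iInter.1 hx ⟨V, hV, hne⟩)
  refine ⟨not_lt.1 fun hlt => hnot (iInter_mem_residual_of_mk_lt_addMeager
    ((Cardinal.mk_le_mk_of_subset hW).trans_lt hlt) hres), fun hc => hnot ?_⟩
  have : Countable W := (hc.mono hW).to_subtype
  exact countable_iInter_mem.2 hres
end
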